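/- arXiv:1701.03896 — 5 statements merged into one kernel-verified Lean document; each statement's English description precedes it below -/
import Mathlib

section
/- For permutations σ, π ∈ S_n, the Ulam distance d(σ,π) := n − ℓ(σ,π), where ℓ is the length of the longest common subsequence, equals the minimum number of translocations needed to transform σ into π. -/
namespace UlamPaper

/-- Underlying function of the translocation `φ(i,j)` (0-indexed). -/
def tf (i j k : ℕ) : ℕ :=
  if i ≤ j then (if k < i ∨ j < k then k else if k = j then i else k + 1)
  else (if k < j ∨ i < k then k else if k = j then i else k - 1)

theorem tf_lt {n i j k : ℕ} (hi : i < n) (hj : j < n) (hk : k < n) : tf i j k < n := by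
  unfold tf; split_ifs <;> omega

theorem tf_tf (i j k : ℕ) : tf j i (tf i j k) = k := by
  unfold tf; split_ifs <;> omega

/-- The translocation `φ(i,j)` as a permutation of `Fin n`: it deletes the entry in
position `i` and reinserts it at position `j`, shifting intermediate entries. -/
def transloc {n : ℕ} (i j : Fin n) : Equiv.Perm (Fin n) where
  toFun k := ⟨tf i.val j.val k.val, tf_lt i.isLt j.isLt k.isLt⟩
  invFun k := ⟨tf j.val i.val k.val, tf_lt j.isLt i.isLt k.isLt⟩
  left_inv k := Fin.ext (tf_tf i.val j.val k.val)
  right_inv k := Fin.ext (tf_tf j.val i.val k.val)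

/-- `IsTransloc φ` : `φ` is a translocation. -/
def IsTransloc {n : ℕ} (φ : Equiv.Perm (Fin n)) : Prop := ∃ i j : Fin n, φ = transloc i j

/-- Length of the longest common subsequence of two `n`-length sequences. -/
noncomputable def lcsLen {n : ℕ} {α : Type*} (u v : Fin n → α) : ℕ :=
  sSup {k | ∃ f g : Fin k → Fin n, StrictMono f ∧ StrictMono g ∧ ∀ p, u (f p) = v (g p)}

/-- The Ulam distance `d(σ,π) = n - ℓ(σ,π)`. -/
noncomputable def ulamDist {n : ℕ} (σ π : Equiv.Perm (Fin n)) : ℕ :=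
  n - lcsLen (⇑σ) (⇑π)

/-- The `r`-regular multipermutation `m_σ^r` (with values in `[1, n/r]`). -/
def mult {n : ℕ} (r : ℕ) (σ : Equiv.Perm (Fin n)) : Fin n → ℕ :=
  fun i => (σ i).val / r + 1

/-- The `r`-regular Ulam distance, expressed as `n - ℓ(m_σ^r, m_π^r)`. -/
noncomputable def multDist {n : ℕ} (r : ℕ) (σ π : Equiv.Perm (Fin n)) : ℕ :=
  n - lcsLen (mult r σ) (mult r π)

/-!
For permutations, a common subsequence of `σ` and `π` is a set of positions on which
`π⁻¹ ∘ σ` is increasing, and `σ * φ(i,j)` corresponds to `(π⁻¹ ∘ σ) ∘ φ(i,j)`. A translocation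
moves a single entry, so it destroys at most one element of an increasing subsequence: each
translocation raises `ℓ` by at most one, and `ℓ(π, π) = n`. Conversely, if `ℓ(σ, π) < n`, some
position `x` lies outside a longest increasing subsequence, and moving the entry at `x` to just
behind the last subsequence entry with a smaller value extends the subsequence by `x`.
-/

open Finset Function

section Translocation

variable {n : ℕ}

@[simp] lemma val_transloc (i j k : Fin n) : (transloc i j k : ℕ) = tf i j k := rfl

@[simp] lemma transloc_apply_right (i j : Fin n) : transloc i j j = i :=
  Fin.ext (by simp only [val_transloc, tf]; split_ifs <;> omega)

@[simp] lemma transloc_transloc (i j k : Fin n) : transloc i j (transloc j i k) = k :=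
  Fin.ext (tf_tf j i k)

lemma transloc_lt_transloc_iff {i j a b : Fin n} (ha : a ≠ j) (hb : b ≠ j) :
    transloc i j a < transloc i j b ↔ a < b := by
  rw [Fin.lt_def, Fin.lt_def, val_transloc, val_transloc]
  have ha' : (a : ℕ) ≠ j := Fin.val_ne_of_ne ha
  have hb' : (b : ℕ) ≠ j := Fin.val_ne_of_ne hb
  unfold tf
  split_ifs <;> omega

/-- Take `j` just behind the new position of `max A` (or `j = 0` if `A = ∅`). -/
lemma exists_transloc_separating (x : Fin n) (A : Finset (Fin n)) (hxA : x ∉ A) :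
    ∃ j, (∀ a ∈ A, transloc j x a < j) ∧
      ∀ b ≠ x, (∀ a ∈ A, a < b) → j < transloc j x b := by
  simp only [Fin.lt_def, val_transloc]
  rcases A.eq_empty_or_nonempty with rfl | hA
  · refine ⟨⟨0, x.pos⟩, by simp, fun b hb _ => ?_⟩
    have hb' : (b : ℕ) ≠ x := Fin.val_ne_of_ne hb
    dsimp only
    unfold tf
    split_ifs <;> omega
  obtain ⟨F, hFA, hF⟩ : ∃ F ∈ A, ∀ a ∈ A, a ≤ F :=
    ⟨A.max' hA, A.max'_mem hA, fun a ha => A.le_max' a ha⟩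
  have hFx : (F : ℕ) ≠ x := Fin.val_ne_of_ne fun h => hxA (h ▸ hFA)
  refine ⟨⟨if (F : ℕ) < x then F + 1 else F, by split_ifs <;> omega⟩, fun a ha => ?_,
    fun b hb hAb => ?_⟩
  · have haF : (a : ℕ) ≤ F := hF a ha
    have hax : (a : ℕ) ≠ x := Fin.val_ne_of_ne fun h => hxA (h ▸ ha)
    dsimp only
    unfold tf
    split_ifs <;> omega
  · have hFb : (F : ℕ) < b := hAb F hFA
    have hbx : (b : ℕ) ≠ x := Fin.val_ne_of_ne hb
    dsimp only
    unfold tf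
    split_ifs <;> omega

end Translocation

section IncreasingSubsequence

variable {n : ℕ} {β : Type*}

lemma strictMonoOn_image_of_lt {α γ : Type*} [Preorder α] [Preorder β] {f : α → β}
    {e : γ → α} {s : Set γ} (h : ∀ a ∈ s, ∀ b ∈ s, e a < e b → f (e a) < f (e b)) :
    StrictMonoOn f (e '' s) := by
  rintro _ ⟨a, ha, rfl⟩ _ ⟨b, hb, rfl⟩
  exact h a ha b hb

lemma strictMonoOn_image_erase_transloc [Preorder β] {τ : Fin n → β} {s : Finset (Fin n)}
    {i j : Fin n} (hs : StrictMonoOn (τ ∘ transloc i j) s) :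
    StrictMonoOn τ ((s.erase j).image (transloc i j)) := by
  rw [coe_image]
  refine strictMonoOn_image_of_lt fun a ha b hb hab => hs (mem_of_mem_erase ha)
    (mem_of_mem_erase hb) ?_
  exact (transloc_lt_transloc_iff (ne_of_mem_erase ha) (ne_of_mem_erase hb)).1 hab

lemma exists_transloc_strictMonoOn_image_insert [LinearOrder β] {τ : Fin n → β}
    (hτ : Injective τ) {s : Finset (Fin n)} (hs : StrictMonoOn τ s) {x : Fin n} (hx : x ∉ s) :
    ∃ j, StrictMonoOn (τ ∘ transloc x j) ((insert x s).image (transloc j x)) := by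
  obtain ⟨j, hbelow, habove⟩ :=
    exists_transloc_separating x (s.filter (τ · < τ x)) (by simp [hx])
  have hne : ∀ {a}, a ∈ s → a ≠ x := fun ha h => hx (h ▸ ha)
  have below : ∀ a ∈ s, transloc j x a < j → τ a < τ x := fun a ha hlt => by
    by_contra! hge
    refine (habove a (hne ha) fun a' ha' => ?_).not_gt hlt
    simp only [mem_filter] at ha'
    exact (hs.lt_iff_lt ha'.1 ha).1 (ha'.2.trans_le hge)
  have above : ∀ b ∈ s, j < transloc j x b → τ x < τ b := fun b hb hlt => by
    by_contra! hle
    have hlt' : τ b < τ x := hle.lt_of_ne (hτ.ne (hne hb))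
    exact (hbelow b (mem_filter.2 ⟨hb, hlt'⟩)).not_gt hlt
  refine ⟨j, ?_⟩
  rw [coe_image]
  refine strictMonoOn_image_of_lt fun a ha b hb hab => ?_
  simp only [comp_apply, transloc_transloc]
  simp only [coe_insert, Set.mem_insert_iff, mem_coe] at ha hb
  rcases ha with rfl | ha <;> rcases hb with rfl | hb
  · exact absurd hab (lt_irrefl _)
  · exact above b hb (by simpa using hab)
  · exact below a ha (by simpa using hab)
  · exact hs ha hb ((transloc_lt_transloc_iff (hne ha) (hne hb)).1 hab)

end IncreasingSubsequence

section CommonSubsequence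

variable {n : ℕ} {α : Type*}

lemma bddAbove_commonSubsequence_lengths (u v : Fin n → α) :
    BddAbove {k | ∃ f g : Fin k → Fin n, StrictMono f ∧ StrictMono g ∧ ∀ p, u (f p) = v (g p)} :=
  ⟨n, fun _ ⟨f, _, hf, _⟩ => by simpa using Fintype.card_le_of_injective f hf.injective⟩

lemma le_lcsLen {u v : Fin n → α} {k : ℕ} {f g : Fin k → Fin n} (hf : StrictMono f)
    (hg : StrictMono g) (h : ∀ p, u (f p) = v (g p)) : k ≤ lcsLen u v :=
  le_csSup (bddAbove_commonSubsequence_lengths u v) ⟨f, g, hf, hg, h⟩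

lemma exists_commonSubsequence_lcsLen (u v : Fin n → α) :
    ∃ f g : Fin (lcsLen u v) → Fin n, StrictMono f ∧ StrictMono g ∧ ∀ p, u (f p) = v (g p) :=
  Nat.sSup_mem (s := {k | ∃ f g : Fin k → Fin n, StrictMono f ∧ StrictMono g ∧
    ∀ p, u (f p) = v (g p)}) ⟨0, finZeroElim, finZeroElim, finZeroElim, finZeroElim, finZeroElim⟩
    (bddAbove_commonSubsequence_lengths u v)

end CommonSubsequence

section Permutation

open Equiv

variable {n : ℕ} {σ π : Perm (Fin n)}

lemma card_le_lcsLen {s : Finset (Fin n)} (hs : StrictMonoOn (π.symm ∘ σ) s) :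
    #s ≤ lcsLen σ π :=
  le_lcsLen (s.orderEmbOfFin rfl).strictMono
    (fun p q hpq => hs (s.orderEmbOfFin_mem rfl p) (s.orderEmbOfFin_mem rfl q)
      ((s.orderEmbOfFin rfl).strictMono hpq))
    (fun _ => (π.apply_symm_apply _).symm)

lemma exists_card_eq_lcsLen (σ π : Perm (Fin n)) :
    ∃ s : Finset (Fin n), StrictMonoOn (π.symm ∘ σ) s ∧ #s = lcsLen σ π := by
  obtain ⟨f, g, hf, hg, hfg⟩ := exists_commonSubsequence_lcsLen σ π
  have hτ : ∀ p, π.symm (σ (f p)) = g p := fun p => by rw [hfg, π.symm_apply_apply]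
  refine ⟨univ.image f, ?_, by rw [card_image_of_injective _ hf.injective, card_univ,
    Fintype.card_fin]⟩
  rw [coe_image, coe_univ, Set.image_univ]
  rintro _ ⟨p, rfl⟩ _ ⟨q, rfl⟩ hpq
  simpa only [comp_apply, hτ] using hg (hf.lt_iff_lt.1 hpq)

lemma le_lcsLen_self (π : Perm (Fin n)) : n ≤ lcsLen π π :=
  le_lcsLen strictMono_id strictMono_id fun _ => rfl

lemma eq_of_le_lcsLen (h : n ≤ lcsLen σ π) : σ = π := by
  obtain ⟨s, hs, hcard⟩ := exists_card_eq_lcsLen σ π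
  have hs_univ : s = univ := (card_eq_iff_eq_univ s).1 (le_antisymm (card_le_univ s)
    (by rw [Fintype.card_fin]; omega))
  have hmono : StrictMono (π.symm ∘ σ) := by simpa [hs_univ] using hs
  exact Equiv.ext fun k => π.symm_apply_eq.1 hmono.apply_eq

lemma lcsLen_mul_transloc_le (i j : Fin n) : lcsLen (σ * transloc i j) π ≤ lcsLen σ π + 1 := by
  obtain ⟨s, hs, hcard⟩ := exists_card_eq_lcsLen (σ * transloc i j) π
  have hle := card_le_lcsLen (strictMonoOn_image_erase_transloc (τ := π.symm ∘ σ) hs)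
  rw [card_image_of_injective _ (transloc i j).injective] at hle
  have := pred_card_le_card_erase (s := s) (a := j)
  omega

lemma exists_transloc_lt_lcsLen (h : lcsLen σ π < n) :
    ∃ i j : Fin n, lcsLen σ π < lcsLen (σ * transloc i j) π := by
  obtain ⟨s, hs, hcard⟩ := exists_card_eq_lcsLen σ π
  obtain ⟨x, -, hx⟩ := exists_mem_notMem_of_card_lt_card (s := s) (t := univ)
    (by rw [card_univ, Fintype.card_fin]; omega)
  obtain ⟨j, hj⟩ :=
    exists_transloc_strictMonoOn_image_insert (π.symm.injective.comp σ.injective) hs hx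
  refine ⟨x, j, ?_⟩
  have hle := card_le_lcsLen (σ := (σ * transloc x j : Perm (Fin n))) hj
  rw [card_image_of_injective _ (transloc j x).injective, card_insert_of_notMem hx] at hle
  omega

lemma lcsLen_mul_prod_le {L : List (Perm (Fin n))} (hL : ∀ φ ∈ L, IsTransloc φ)
    (σ : Perm (Fin n)) : lcsLen (σ * L.prod) π ≤ lcsLen σ π + L.length := by
  induction L generalizing σ with
  | nil => simp
  | cons φ L ih =>
    obtain ⟨⟨i, j, rfl⟩, hL'⟩ := List.forall_mem_cons.1 hL
    have := lcsLen_mul_transloc_le (σ := σ) (π := π) i j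
    rw [List.prod_cons, ← mul_assoc, List.length_cons]
    linarith [ih hL' (σ * transloc i j)]

lemma ulamDist_le_length {L : List (Perm (Fin n))} (hL : ∀ φ ∈ L, IsTransloc φ)
    (h : σ * L.prod = π) : ulamDist σ π ≤ L.length := by
  have := lcsLen_mul_prod_le (π := π) hL σ
  rw [h] at this
  have := le_lcsLen_self π
  unfold ulamDist
  omega

lemma exists_transloc_list_of_le_lcsLen_add {d : ℕ} (h : n ≤ lcsLen σ π + d) :
    ∃ L : List (Perm (Fin n)), L.length ≤ d ∧ (∀ φ ∈ L, IsTransloc φ) ∧ σ * L.prod = π := by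
  induction d generalizing σ with
  | zero => exact ⟨[], le_rfl, by simp, by simpa using eq_of_le_lcsLen h⟩
  | succ d ih =>
    by_cases hσ : n ≤ lcsLen σ π
    · exact ⟨[], by simp, by simp, by simpa using eq_of_le_lcsLen hσ⟩
    obtain ⟨i, j, hij⟩ := exists_transloc_lt_lcsLen (not_le.1 hσ)
    obtain ⟨L, hlen, hL, hprod⟩ := ih (σ := σ * transloc i j) (by omega)
    refine ⟨transloc i j :: L, by simpa using hlen, List.forall_mem_cons.2 ⟨⟨i, j, rfl⟩, hL⟩, ?_⟩
    rwa [List.prod_cons, ← mul_assoc]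

end Permutation

/-- The Ulam distance `d(σ,π) = n − ℓ(σ,π)` equals the minimum number of
translocations needed to transform `σ` into `π`. -/
theorem ulamDist_eq_min_translocations {n : ℕ} (σ π : Equiv.Perm (Fin n)) :
    ulamDist σ π =
      sInf {k | ∃ L : List (Equiv.Perm (Fin n)),
        L.length = k ∧ (∀ φ ∈ L, IsTransloc φ) ∧ σ * L.prod = π} := by
  refine (IsLeast.csInf_eq ⟨?_, ?_⟩).symm
  · obtain ⟨L, hlen, hL, hprod⟩ :=
      exists_transloc_list_of_le_lcsLen_add (σ := σ) (π := π) (d := ulamDist σ π)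
        (by unfold ulamDist; omega)
    exact ⟨L, le_antisymm hlen (ulamDist_le_length hL hprod), hL, hprod⟩
  · rintro k ⟨L, rfl, hL, hprod⟩
    exact ulamDist_le_length hL hprod

end UlamPaper
end

section
/- For σ, π ∈ S_n and r dividing n, the r-regular Ulam distance d_r(σ,π) := min over σ' ≡_r σ and π' ≡_r π of d(σ',π') satisfies d_r(σ,π) = n − ℓ(m_σ^r, m_π^r), where ℓ denotes the longest common subsequence length of the corresponding r-regular multipermutations. -/
namespace UlamPaper

lemma lcs_set_nonempty {n : ℕ} {α : Type*} (u v : Fin n → α) :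
    {k | ∃ f g : Fin k → Fin n, StrictMono f ∧ StrictMono g ∧ ∀ p, u (f p) = v (g p)}.Nonempty :=
  ⟨0, Fin.elim0, Fin.elim0, fun a => a.elim0, fun a => a.elim0, fun p => p.elim0⟩

lemma lcs_set_bdd {n : ℕ} {α : Type*} (u v : Fin n → α) :
    BddAbove {k | ∃ f g : Fin k → Fin n, StrictMono f ∧ StrictMono g ∧ ∀ p, u (f p) = v (g p)} := by
  refine ⟨n, fun k hk => ?_⟩
  obtain ⟨f, _, hf, _, _⟩ := hk
  simpa using Fintype.card_le_of_injective f hf.injective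

/-- Extend a color-preserving partial matching to a color-preserving permutation. -/
lemma exists_perm_fiber {α β : Type*} [DecidableEq α] (c : α → β) :
    ∀ (k : ℕ) (u v : Fin k → α), Function.Injective u → Function.Injective v →
      (∀ p, c (u p) = c (v p)) →
      ∃ τ : Equiv.Perm α, (∀ x, c (τ x) = c x) ∧ ∀ p, τ (u p) = v p := by
  intro k
  induction k with
  | zero => exact fun u v _ _ _ => ⟨1, fun x => rfl, fun p => p.elim0⟩
  | succ k ih =>
    intro u v hu hv hc
    obtain ⟨τ, hτc, hτ⟩ := ih (u ∘ Fin.castSucc) (v ∘ Fin.castSucc)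
      (hu.comp (Fin.castSucc_injective k)) (hv.comp (Fin.castSucc_injective k))
      (fun p => hc _)
    set a := τ (u (Fin.last k)) with ha
    set b := v (Fin.last k) with hb
    have hcab : c a = c b := by rw [ha, hb, hτc, hc]
    refine ⟨τ.trans (Equiv.swap a b), fun x => ?_, fun p => ?_⟩
    · show c (Equiv.swap a b (τ x)) = c x
      rw [Equiv.swap_apply_def]
      split_ifs with h1 h2
      · rw [← hcab, ← h1, hτc]
      · rw [hcab, ← h2, hτc]
      · rw [hτc]
    · show Equiv.swap a b (τ (u p)) = v p
      refine Fin.lastCases ?_ (fun q => ?_) p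
      · rw [← ha, Equiv.swap_apply_left, hb]
      · have h1 : τ (u (Fin.castSucc q)) = v (Fin.castSucc q) := hτ q
        rw [h1]
        refine Equiv.swap_apply_of_ne_of_ne ?_ ?_
        · rw [← h1, ha]
          intro h
          exact (Fin.castSucc_lt_last q).ne (hu (τ.injective h))
        · rw [hb]
          intro h
          exact (Fin.castSucc_lt_last q).ne (hv h)

/-- The `r`-regular Ulam distance, defined as the minimum Ulam distance over the
equivalence classes of `σ` and `π`, equals `n − ℓ(m_σ^r, m_π^r)`. -/
theorem rRegularDist_eq {n r : ℕ} (hr : 0 < r) (hdvd : r ∣ n) (σ π : Equiv.Perm (Fin n)) :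
    sInf {d | ∃ σ' π' : Equiv.Perm (Fin n),
        mult r σ' = mult r σ ∧ mult r π' = mult r π ∧ d = ulamDist σ' π'} =
      n - lcsLen (mult r σ) (mult r π) := by
  set L := lcsLen (mult r σ) (mult r π) with hLdef
  have hLmem : L ∈ {k | ∃ f g : Fin k → Fin n, StrictMono f ∧ StrictMono g ∧
      ∀ p, mult r σ (f p) = mult r π (g p)} :=
    Nat.sSup_mem (lcs_set_nonempty _ _) (lcs_set_bdd _ _)
  obtain ⟨f, g, hf, hg, hfg⟩ := hLmem
  -- construct π' equivalent to π matching σ on the common subsequence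
  obtain ⟨τ, hτc, hτ⟩ := exists_perm_fiber (fun x : Fin n => x.val / r) L
    (fun p => π (g p)) (fun p => σ (f p))
    (fun p q h => hg.injective (π.injective h))
    (fun p q h => hf.injective (σ.injective h))
    (fun p => by
      have := hfg p
      simp only [mult] at this
      show (π (g p)).val / r = (σ (f p)).val / r
      omega)
  set π' : Equiv.Perm (Fin n) := π.trans τ with hπ'
  have hmultπ' : mult r π' = mult r π := by
    funext i
    show (τ (π i)).val / r + 1 = (π i).val / r + 1
    rw [hτc]
  have hlcs : L ≤ lcsLen (⇑σ) (⇑π') := by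
    refine le_csSup (lcs_set_bdd _ _) ⟨f, g, hf, hg, fun p => ?_⟩
    exact (hτ p).symm
  refine le_antisymm ?_ ?_
  · have hmem : ulamDist σ π' ∈ {d | ∃ σ' π' : Equiv.Perm (Fin n),
        mult r σ' = mult r σ ∧ mult r π' = mult r π ∧ d = ulamDist σ' π'} :=
      ⟨σ, π', rfl, hmultπ', rfl⟩
    refine (Nat.sInf_le hmem).trans ?_
    exact Nat.sub_le_sub_left hlcs n
  · refine le_csInf ⟨ulamDist σ π, σ, π, rfl, rfl, rfl⟩ ?_
    rintro d ⟨σ', π'', h1, h2, rfl⟩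
    have hle : lcsLen (⇑σ') (⇑π'') ≤ L := by
      refine csSup_le (lcs_set_nonempty _ _) ?_
      rintro k ⟨f', g', hf', hg', h''⟩
      refine le_csSup (lcs_set_bdd _ _) ⟨f', g', hf', hg', fun p => ?_⟩
      rw [← h1, ← h2]
      show (σ' (f' p)).val / r + 1 = (π'' (g' p)).val / r + 1
      rw [h'' p]
    exact Nat.sub_le_sub_left hle n

end UlamPaper
end

section
/- If n/r ≥ 2 and r ≥ 2, then the r-regular Ulam distance is not left invariant: there exist σ', π' ∈ S_n with d_r(e, σ') ≠ d_r(π'e, π'σ'). Concretely, for σ' reversing the first 2r entries and π' interleaving blocks as [1, r+1, 2, r+2, ..., r, 2r, 2r+1, ..., n], one has d_r(e, σ') = r ≥ 2 while d_r(π', π'σ') = 1. -/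
namespace UlamPaper

/-! ### Auxiliary material for the non-invariance theorem -/

section Aux

/-- division helper -/
lemma divr_eq_one {r x : ℕ} (hr : 0 < r) (h1 : r ≤ x) (h2 : x < 2*r) : x / r = 1 := by
  have h3 : 1 ≤ x / r := by rw [Nat.le_div_iff_mul_le hr]; omega
  have h4 : x / r < 2 := by rw [Nat.div_lt_iff_lt_mul hr]; omega
  omega

lemma divr_one_bounds {r x : ℕ} (hr : 0 < r) (h : x / r = 1) : r ≤ x ∧ x < 2*r := by
  constructor
  · by_contra hc
    rw [Nat.div_eq_of_lt (by omega)] at h; omega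
  · by_contra hc
    have : 2 ≤ x / r := by rw [Nat.le_div_iff_mul_le hr]; omega
    omega

lemma divr_zero_bound {r x : ℕ} (hr : 0 < r) (h : x / r = 0) : x < r := by
  by_contra hc
  have : 1 ≤ x / r := by rw [Nat.le_div_iff_mul_le hr]; omega
  omega

lemma fin_le_apply {k n : ℕ} {f : Fin k → Fin n} (hf : StrictMono f) (p : Fin k) :
    p.val ≤ (f p).val := by
  have H : ∀ t, ∀ p : Fin k, p.val = t → t ≤ (f p).val := by
    intro t
    induction t with
    | zero => intro p _; exact Nat.zero_le _
    | succ t ih =>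
      intro p hp
      have hq : t < k := by omega
      have h1 : (⟨t, hq⟩ : Fin k) < p := by simp [Fin.lt_def]; omega
      have h2 := hf h1
      have h3 := ih ⟨t, hq⟩ rfl
      rw [Fin.lt_def] at h2
      omega
  exact H p.val p rfl

/-- A strictly monotone self-map of `Fin n` is the identity. -/
lemma fin_id {n : ℕ} {f : Fin n → Fin n} (hf : StrictMono f) (p : Fin n) : f p = p := by
  have h1 := fin_le_apply hf p
  have hrev : StrictMono (fun q : Fin n => (f q.rev).rev) := by
    intro a b hab
    simp only [Fin.rev_lt_rev]
    exact hf (Fin.rev_lt_rev.mpr hab)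
  have h2 := fin_le_apply hrev p.rev
  simp only [Fin.rev_rev, Fin.val_rev] at h2
  have := p.isLt
  have := (f p).isLt
  apply Fin.ext
  omega

/-- The LCS index set. -/
def lcsSet {n : ℕ} {α : Type*} (u v : Fin n → α) : Set ℕ :=
  {k | ∃ f g : Fin k → Fin n, StrictMono f ∧ StrictMono g ∧ ∀ p, u (f p) = v (g p)}

lemma lcsLen_def {n : ℕ} {α : Type*} (u v : Fin n → α) : lcsLen u v = sSup (lcsSet u v) := rfl

lemma zero_mem_lcsSet {n : ℕ} {α : Type*} (u v : Fin n → α) : 0 ∈ lcsSet u v :=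
  ⟨Fin.elim0, Fin.elim0, fun a => a.elim0, fun a => a.elim0, fun p => p.elim0⟩

lemma mem_lcsSet_le {n : ℕ} {α : Type*} {u v : Fin n → α} {k : ℕ} (hk : k ∈ lcsSet u v) :
    k ≤ n := by
  obtain ⟨f, g, hf, hg, h⟩ := hk
  have := Fintype.card_le_of_injective f hf.injective
  simpa using this

lemma lcsSet_bddAbove {n : ℕ} {α : Type*} (u v : Fin n → α) : BddAbove (lcsSet u v) :=
  ⟨n, fun _ hk => mem_lcsSet_le hk⟩

lemma lcsLen_eq {n : ℕ} {α : Type*} {u v : Fin n → α} {m : ℕ}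
    (hmem : m ∈ lcsSet u v) (hub : ∀ k ∈ lcsSet u v, k ≤ m) : lcsLen u v = m := by
  rw [lcsLen_def]
  exact le_antisymm (csSup_le ⟨0, zero_mem_lcsSet u v⟩ hub) (le_csSup (lcsSet_bddAbove u v) hmem)

/-- If a strictly monotone `f : Fin k → Fin n` avoids a block of `r` consecutive
indices, then `k ≤ n - r`. -/
lemma avoid_block {k n a r : ℕ} {f : Fin k → Fin n} (hf : StrictMono f) (han : a + r ≤ n)
    (h : ∀ p, (f p).val < a ∨ a + r ≤ (f p).val) : k ≤ n - r := by
  have hlt : ∀ p : Fin k, (if (f p).val < a then (f p).val else (f p).val - r) < n - r := by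
    intro p
    have := (f p).isLt
    rcases h p with h1 | h1 <;> split_ifs <;> omega
  set h' : Fin k → Fin (n - r) := fun p =>
    ⟨if (f p).val < a then (f p).val else (f p).val - r, hlt p⟩ with hh'
  have hmono : StrictMono h' := by
    intro p q hpq
    have h2 := hf hpq
    rw [Fin.lt_def] at h2 ⊢
    have hp := h p
    have hq := h q
    simp only [hh']
    split_ifs <;> omega
  have := Fintype.card_le_of_injective h' hmono.injective
  simpa using this

/-- The reversal of the first `2r` entries, as a function. -/
def sfun (r i : ℕ) : ℕ := if i < 2*r then 2*r - 1 - i else i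

lemma sfun_lt {n r i : ℕ} (h2 : 2*r ≤ n) (hi : i < n) : sfun r i < n := by
  unfold sfun; split_ifs <;> omega

lemma sfun_sfun (r i : ℕ) : sfun r (sfun r i) = i := by
  unfold sfun; split_ifs <;> omega

/-- `σ'` : the permutation reversing the first `2r` entries. -/
def sigmaPerm (n r : ℕ) (h2 : 2*r ≤ n) : Equiv.Perm (Fin n) where
  toFun i := ⟨sfun r i.val, sfun_lt h2 i.isLt⟩
  invFun i := ⟨sfun r i.val, sfun_lt h2 i.isLt⟩
  left_inv i := Fin.ext (sfun_sfun r i.val)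
  right_inv i := Fin.ext (sfun_sfun r i.val)

/-- The interleaving function: `0, r, 1, r+1, …, r-1, 2r-1` then identity. -/
def pfun (r i : ℕ) : ℕ := if i < 2*r then (if i % 2 = 0 then i / 2 else r + i / 2) else i

/-- Inverse of `pfun`. -/
def qfun (r j : ℕ) : ℕ := if j < r then 2*j else if j < 2*r then 2*(j - r) + 1 else j

lemma pfun_lt {n r i : ℕ} (h2 : 2*r ≤ n) (hi : i < n) : pfun r i < n := by
  unfold pfun; split_ifs <;> omega

lemma qfun_lt {n r j : ℕ} (h2 : 2*r ≤ n) (hj : j < n) : qfun r j < n := by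
  unfold qfun; split_ifs <;> omega

lemma qfun_pfun (r i : ℕ) : qfun r (pfun r i) = i := by
  unfold pfun qfun; split_ifs <;> omega

lemma pfun_qfun (r j : ℕ) : pfun r (qfun r j) = j := by
  unfold pfun qfun; split_ifs <;> omega

/-- `π'` : the interleaving permutation. -/
def piPerm (n r : ℕ) (h2 : 2*r ≤ n) : Equiv.Perm (Fin n) where
  toFun i := ⟨pfun r i.val, pfun_lt h2 i.isLt⟩
  invFun j := ⟨qfun r j.val, qfun_lt h2 j.isLt⟩
  left_inv i := Fin.ext (qfun_pfun r i.val)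
  right_inv j := Fin.ext (pfun_qfun r j.val)

lemma pfun_div {r j : ℕ} (hr : 0 < r) (hj : j < 2*r) : pfun r j / r = j % 2 := by
  unfold pfun
  rcases Nat.even_or_odd j with he | ho
  · have h0 : j % 2 = 0 := Nat.even_iff.mp he
    rw [if_pos hj, if_pos h0, h0, Nat.div_eq_of_lt (by omega)]
  · have h0 : j % 2 = 1 := Nat.odd_iff.mp ho
    rw [if_pos hj, if_neg (by omega), h0]
    exact divr_eq_one hr (by omega) (by omega)

end Aux

/-- The `r`-regular Ulam distance is not left invariant: for `n/r ≥ 2` and `r ≥ 2`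
there are `σ'`, `π'` with `d_r(e, σ') = r ≥ 2` while `d_r(π'e, π'σ') = 1`. -/
theorem multDist_not_left_invariant {n r : ℕ} (hdvd : r ∣ n) (hr : 2 ≤ r)
    (hnr : 2 ≤ n / r) :
    ∃ σ' π' : Equiv.Perm (Fin n),
      multDist r 1 σ' = r ∧
      multDist r (π' * 1) (π' * σ') = 1 ∧
      multDist r 1 σ' ≠ multDist r (π' * 1) (π' * σ') := by
  have hr0 : 0 < r := by omega
  have h2 : 2*r ≤ n := by
    have hn : n / r * r = n := Nat.div_mul_cancel hdvd
    nlinarith [hnr, hn]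
  have hA : multDist r 1 (sigmaPerm n r h2) = r := by
    have hL : lcsLen (mult r 1) (mult r (sigmaPerm n r h2)) = n - r := by
      apply lcsLen_eq
      · -- membership : a common subsequence of length n - r
        refine ⟨fun p => ⟨p.val + r, by omega⟩,
          fun p => ⟨if p.val < r then p.val else p.val + r, by have := p.isLt; split_ifs <;> omega⟩,
          ?_, ?_, ?_⟩
        · intro p q hpq; rw [Fin.lt_def] at hpq ⊢; simpa using hpq
        · intro p q hpq; rw [Fin.lt_def] at hpq ⊢; simp only; split_ifs <;> omega
        · intro p
          simp only [mult, sigmaPerm, Equiv.Perm.one_apply, Equiv.coe_fn_mk]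
          by_cases hp : p.val < r
          · rw [if_pos hp]
            unfold sfun
            rw [if_pos (by omega)]
            rw [divr_eq_one hr0 (by omega) (by omega), divr_eq_one hr0 (by omega) (by omega)]
          · rw [if_neg hp]
            unfold sfun
            rw [if_neg (by omega)]
      · -- upper bound
        rintro k ⟨f, g, hf, hg, hv⟩
        simp only [mult, sigmaPerm, Equiv.Perm.one_apply, Equiv.coe_fn_mk] at hv
        by_cases hc : ∃ p, (f p).val < r
        · -- value 1 is attained, so value 2 never is : f avoids [r, 2r)
          obtain ⟨p, hp⟩ := hc
          apply avoid_block hf (a := r) (by omega)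
          intro q
          by_contra hq
          push_neg at hq
          -- r ≤ f q < 2r
          have hq1 : r ≤ (f q).val ∧ (f q).val < 2*r := by omega
          -- values
          have hvp := hv p
          have hvq := hv q
          rw [Nat.div_eq_of_lt hp] at hvp
          rw [divr_eq_one hr0 hq1.1 hq1.2] at hvq
          -- sfun (g p) / r = 0, sfun (g q) / r = 1
          have hgp := divr_zero_bound hr0 (by omega : sfun r (g p).val / r = 0)
          have hgq := divr_one_bounds hr0 (by omega : sfun r (g q).val / r = 1)
          -- hence r ≤ g p < 2r and g q < r
          have hgp2 : r ≤ (g p).val ∧ (g p).val < 2*r := by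
            unfold sfun at hgp
            by_cases h : (g p).val < 2*r
            · rw [if_pos h] at hgp; omega
            · rw [if_neg h] at hgp; omega
          have hgq2 : (g q).val < r := by
            unfold sfun at hgq
            by_cases h : (g q).val < 2*r
            · rw [if_pos h] at hgq; omega
            · rw [if_neg h] at hgq; omega
          -- q < p via g, but p < q via f : contradiction
          have hqp : q < p := by
            have : g q < g p := by rw [Fin.lt_def]; omega
            exact hg.lt_iff_lt.mp this
          have hpq : p < q := by
            have : f p < f q := by rw [Fin.lt_def]; omega
            exact hf.lt_iff_lt.mp this
          exact absurd hpq (not_lt.mpr hqp.le)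
        · -- value 1 never attained : f avoids [0, r)
          push_neg at hc
          apply avoid_block hf (a := 0) (by omega)
          intro p
          right
          have := hc p
          omega
    unfold multDist
    rw [hL]
    omega
  have hB : multDist r (piPerm n r h2 * 1) (piPerm n r h2 * sigmaPerm n r h2) = 1 := by
    rw [mul_one]
    have hL : lcsLen (mult r (piPerm n r h2)) (mult r (piPerm n r h2 * sigmaPerm n r h2))
        = n - 1 := by
      apply lcsLen_eq
      · -- membership : common subsequence of length n - 1
        refine ⟨fun p => ⟨p.val + 1, by omega⟩,
          fun p => ⟨if p.val < 2*r - 1 then p.val else p.val + 1,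
            by have := p.isLt; split_ifs <;> omega⟩,
          ?_, ?_, ?_⟩
        · intro p q hpq; rw [Fin.lt_def] at hpq ⊢; simpa using hpq
        · intro p q hpq; rw [Fin.lt_def] at hpq ⊢; simp only; split_ifs <;> omega
        · intro p
          simp only [mult, Equiv.Perm.mul_apply, piPerm, sigmaPerm, Equiv.coe_fn_mk]
          by_cases hp : p.val < 2*r - 1
          · rw [if_pos hp]
            have hs : sfun r p.val = 2*r - 1 - p.val := by unfold sfun; rw [if_pos (by omega)]
            rw [hs, pfun_div hr0 (by omega), pfun_div hr0 (by omega)]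
            omega
          · rw [if_neg hp]
            have hs : sfun r (p.val + 1) = p.val + 1 := by unfold sfun; rw [if_neg (by omega)]
            rw [hs]
      · -- upper bound : n - 1
        rintro k ⟨f, g, hf, hg, hv⟩
        have hkn : k ≤ n := mem_lcsSet_le ⟨f, g, hf, hg, hv⟩
        by_contra hk
        have hkeq : k = n := by omega
        subst hkeq
        have hv0 := hv ⟨0, by omega⟩
        rw [fin_id hf, fin_id hg] at hv0
        simp only [mult, Equiv.Perm.mul_apply, piPerm, sigmaPerm, Equiv.coe_fn_mk] at hv0
        have hs : sfun r 0 = 2*r - 1 := by unfold sfun; rw [if_pos (by omega)]; omega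
        rw [hs, pfun_div hr0 (by omega), pfun_div hr0 (by omega)] at hv0
        omega
    unfold multDist
    rw [hL]
    omega
  exact ⟨sigmaPerm n r h2, piPerm n r h2, hA, hB, by rw [hA, hB]; omega⟩

end UlamPaper
end

section
/- For all σ ∈ S_n, if σ'(i) = σ(i) and π'(j) = π(j) for permutations σ' ≡_r σ and π' ≡_r π, then any common subsequence of σ' and π' induces a common subsequence of m_σ^r and m_π^r of the same length; hence ℓ(σ', π') ≤ ℓ(m_σ^r, m_π^r) for all σ' ≡_r σ, π' ≡_r π. -/
namespace UlamPaper

/-- Any common subsequence of representatives `σ' ≡_r σ`, `π' ≡_r π` induces one of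
`m_σ^r`, `m_π^r`; hence `ℓ(σ', π') ≤ ℓ(m_σ^r, m_π^r)`. -/
theorem lcsLen_le_lcsLen_mult {n r : ℕ} (hr : 0 < r) (hdvd : r ∣ n)
    (σ π σ' π' : Equiv.Perm (Fin n))
    (hσ : mult r σ' = mult r σ) (hπ : mult r π' = mult r π) :
    lcsLen (⇑σ') (⇑π') ≤ lcsLen (mult r σ) (mult r π) := by
  apply csSup_le_csSup
  · refine ⟨n, fun k hk => ?_⟩
    obtain ⟨f, g, hf, hg, _⟩ := hk
    simpa using (Fintype.card_le_of_embedding ⟨f, hf.injective⟩)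
  · exact ⟨0, Fin.elim0, Fin.elim0, fun a => a.elim0, fun a => a.elim0, fun a => a.elim0⟩
  · rintro k ⟨f, g, hf, hg, h⟩
    refine ⟨f, g, hf, hg, fun p => ?_⟩
    have h1 := congrFun hσ (f p)
    have h2 := congrFun hπ (g p)
    simp only [mult] at h1 h2 ⊢
    rw [← h1, ← h2, h p]

end UlamPaper
end

section
/- Let T_n := {φ(i,j) ∈ S_n : i − j ≠ 1} be the set of translocations excluding those of the form φ(i, i−1). Then for every σ ∈ S_n, S(σ,1) = {σφ : φ ∈ T_n} and |T_n| = |S(σ,1)| = 1 + (n−1)². -/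
namespace UlamPaper

/-- `T_n`, the unique set of translocations: all `φ(i,j)` with `i − j ≠ 1`. -/
def Tset (n : ℕ) : Set (Equiv.Perm (Fin n)) :=
  {φ | ∃ i j : Fin n, i.val ≠ j.val + 1 ∧ φ = transloc i j}


section Aux

lemma mono_add {m : ℕ} {f : Fin m → Fin (m+1)} (hf : StrictMono f) :
    ∀ (d : ℕ) (p q : Fin m), p.val + d = q.val → (f p).val + d ≤ (f q).val := by
  intro d
  induction d with
  | zero => intro p q h; have : p = q := Fin.ext (by omega); subst this; omega
  | succ d ih =>
    intro p q h
    have hq : q.val - 1 < m := by omega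
    have h1 := ih p ⟨q.val - 1, hq⟩ (show p.val + d = q.val - 1 by omega)
    have h2 : f ⟨q.val - 1, hq⟩ < f q := hf (show (q.val - 1 : ℕ) < q.val by omega)
    rw [Fin.lt_def] at h2
    omega

lemma skip_form {m : ℕ} {f : Fin m → Fin (m+1)} (hf : StrictMono f) :
    ∃ b ≤ m, ∀ p : Fin m, (f p).val = if p.val < b then p.val else p.val + 1 := by
  have lower : ∀ p : Fin m, p.val ≤ (f p).val := by
    intro p
    have hpl := p.isLt
    have h0 : (0:ℕ) < m := by omega
    have := mono_add hf p.val ⟨0, h0⟩ p (show 0 + p.val = p.val by omega)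
    omega
  have upper : ∀ p : Fin m, (f p).val ≤ p.val + 1 := by
    intro p
    have hpl := p.isLt
    have hm : m - 1 < m := by omega
    have := mono_add hf (m - 1 - p.val) p ⟨m-1, hm⟩ (show p.val + (m-1-p.val) = m-1 by omega)
    have := (f ⟨m-1, hm⟩).isLt
    omega
  by_cases hall : ∀ p : Fin m, (f p).val = p.val
  · exact ⟨m, le_rfl, fun p => by rw [hall p, if_pos p.isLt]⟩
  · push_neg at hall
    obtain ⟨p0, hp0⟩ := hall
    classical
    have hex : ∃ v, ∃ h : v < m, (f ⟨v, h⟩).val = v + 1 := by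
      refine ⟨p0.val, p0.isLt, ?_⟩
      have := lower p0; have := upper p0
      have heq : f ⟨p0.val, p0.isLt⟩ = f p0 := by congr
      rw [heq]; omega
    let b := Nat.find hex
    obtain ⟨hb, hfb⟩ := Nat.find_spec hex
    refine ⟨b, by omega, fun p => ?_⟩
    by_cases hpb : p.val < b
    · rw [if_pos hpb]
      have hmin : ¬ ∃ h : p.val < m, (f ⟨p.val, h⟩).val = p.val + 1 := Nat.find_min hex hpb
      push_neg at hmin
      have h3 := hmin p.isLt
      have heq : f ⟨p.val, p.isLt⟩ = f p := by congr
      rw [heq] at h3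
      have := lower p; have := upper p
      omega
    · rw [if_neg hpb]
      push_neg at hpb
      have h4 := mono_add hf (p.val - b) ⟨b, hb⟩ p (show b + (p.val - b) = p.val by omega)
      rw [hfb] at h4
      have := upper p
      omega


lemma transloc_val (i j k : Fin n) : (transloc i j k).val = tf i.val j.val k.val := rfl
lemma tf_self (i j : ℕ) : tf i j j = i := by unfold tf; split_ifs <;> omega
lemma transloc_swap (a : Fin n) (b : Fin n) (h : b.val = a.val + 1) :
    transloc b a = transloc a b := by
  apply Equiv.ext; intro k; apply Fin.ext
  show tf b.val a.val k.val = tf a.val b.val k.val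
  unfold tf; split_ifs <;> omega
lemma lcs_bdd {α : Type*} (u v : Fin n → α) :
    BddAbove {k | ∃ f g : Fin k → Fin n, StrictMono f ∧ StrictMono g ∧ ∀ p, u (f p) = v (g p)} := by
  refine ⟨n, fun k hk => ?_⟩
  obtain ⟨f, g, hf, hg, _⟩ := hk
  have := Fintype.card_le_of_injective f hf.injective
  simpa using this
lemma lcs_ge {α : Type*} {u v : Fin n → α} {k : ℕ}
    (f g : Fin k → Fin n) (hf : StrictMono f) (hg : StrictMono g)
    (h : ∀ p, u (f p) = v (g p)) : k ≤ lcsLen u v :=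
  le_csSup (lcs_bdd u v) ⟨f, g, hf, hg, h⟩
lemma lcs_mem_zero {α : Type*} (u v : Fin n → α) :
    0 ∈ {k | ∃ f g : Fin k → Fin n, StrictMono f ∧ StrictMono g ∧ ∀ p, u (f p) = v (g p)} :=
  ⟨Fin.elim0, Fin.elim0, fun p => p.elim0, fun p => p.elim0, fun p => p.elim0⟩

lemma lcs_wit {α : Type*} (u v : Fin n → α) :
    ∃ f g : Fin (lcsLen u v) → Fin n, StrictMono f ∧ StrictMono g ∧ ∀ p, u (f p) = v (g p) :=
  Nat.sSup_mem ⟨0, lcs_mem_zero u v⟩ (lcs_bdd u v)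

lemma transloc_diag (i : Fin n) : transloc i i = 1 := by
  apply Equiv.ext; intro k; apply Fin.ext
  show tf i.val i.val k.val = k.val
  unfold tf; split_ifs <;> omega
lemma transloc_inj {i j i' j' : Fin n}
    (h1 : i.val ≠ j.val + 1) (h2 : i ≠ j) (h1' : i'.val ≠ j'.val + 1) (h2' : i' ≠ j')
    (h : transloc i j = transloc i' j') : i = i' ∧ j = j' := by
  have H : ∀ k : Fin n, tf i.val j.val k.val = tf i'.val j'.val k.val := by
    intro k; rw [← transloc_val, ← transloc_val, h]
  have hij : i.val ≠ j.val := fun hc => h2 (Fin.ext hc)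
  have hij' : i'.val ≠ j'.val := fun hc => h2' (Fin.ext hc)
  have Hj := H j
  have Hj' := H j'
  rw [tf_self] at Hj'
  have e1 : tf i.val j.val j.val = i.val := tf_self _ _
  rw [e1] at Hj
  constructor
  · rcases tf_cases i'.val j'.val j.val with ⟨hne, he⟩ | ⟨heq, he⟩ | ⟨hne, _, _, he⟩ | ⟨hne, _, _, he⟩ <;>
      rcases tf_cases i.val j.val j'.val with ⟨hne2, he2⟩ | ⟨heq2, he2⟩ | ⟨hne2, _, _, he2⟩ | ⟨hne2, _, _, he2⟩ <;>
      apply Fin.ext <;> omega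
  · rcases tf_cases i'.val j'.val j.val with ⟨hne, he⟩ | ⟨heq, he⟩ | ⟨hne, _, _, he⟩ | ⟨hne, _, _, he⟩ <;>
      rcases tf_cases i.val j.val j'.val with ⟨hne2, he2⟩ | ⟨heq2, he2⟩ | ⟨hne2, _, _, he2⟩ | ⟨hne2, _, _, he2⟩ <;>
      apply Fin.ext <;> omega
where
  tf_cases (i j k : ℕ) :
    (k ≠ j ∧ tf i j k = k) ∨ (k = j ∧ tf i j k = i) ∨
    (k ≠ j ∧ i ≤ k ∧ k < j ∧ tf i j k = k + 1) ∨ (k ≠ j ∧ j < k ∧ k ≤ i ∧ tf i j k = k - 1) := by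
      unfold tf; split_ifs <;> omega

open Finset in
lemma Tset_ncard (hn : 0 < n) : (Tset n).ncard = 1 + (n - 1) ^ 2 := by
  classical
  set offd : Finset (Fin n × Fin n) :=
    univ.filter (fun p => p.1.val ≠ p.2.val + 1 ∧ p.1 ≠ p.2) with hoffd
  have cardA : (univ.filter (fun p : Fin n × Fin n => p.1.val = p.2.val + 1)).card = n - 1 := by
    apply Finset.card_eq_of_bijective
      (fun i hi => (⟨i + 1, by omega⟩, ⟨i, by omega⟩))
    · rintro ⟨x, y⟩ ha
      simp only [mem_filter] at ha
      refine ⟨y.val, by have := x.isLt; omega, ?_⟩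
      ext <;> simp <;> omega
    · intro i hi; simp
    · intro i j hi hj hij
      simpa using congrArg (fun p => (Prod.snd p : Fin n).val) hij
  have cardB : (univ.filter (fun p : Fin n × Fin n => p.1 = p.2)).card = n := by
    apply Finset.card_eq_of_bijective (fun i hi => (⟨i, hi⟩, ⟨i, hi⟩))
    · rintro ⟨x, y⟩ ha
      simp only [mem_filter] at ha
      exact ⟨x.val, x.isLt, by ext <;> simp [ha.2] <;> rw [← ha.2]⟩
    · intro i hi; simp
    · intro i j hi hj hij
      simpa using congrArg (fun p => (Prod.fst p : Fin n).val) hij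
  have hcompl : univ.filter (fun p : Fin n × Fin n => ¬(p.1.val ≠ p.2.val + 1 ∧ p.1 ≠ p.2)) =
      univ.filter (fun p : Fin n × Fin n => p.1.val = p.2.val + 1) ∪
      univ.filter (fun p : Fin n × Fin n => p.1 = p.2) := by
    rw [← Finset.filter_or]
    apply Finset.filter_congr
    intro p _
    constructor
    · intro hp
      by_cases h : p.1.val = p.2.val + 1
      · simp [h]
      · simp [Fin.ext_iff] at hp ⊢; omega
    · rintro (h | h) ⟨hc1, hc2⟩
      · exact hc1 h
      · exact hc2 h
  have hdisj : Disjoint (univ.filter (fun p : Fin n × Fin n => p.1.val = p.2.val + 1))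
      (univ.filter (fun p : Fin n × Fin n => p.1 = p.2)) := by
    rw [Finset.disjoint_left]
    rintro ⟨x, y⟩ hx hy
    simp only [mem_filter] at hx hy
    have := hy.2
    rw [this] at hx
    omega
  have htot := Finset.card_filter_add_card_filter_not
    (s := (univ : Finset (Fin n × Fin n)))
    (p := fun p => p.1.val ≠ p.2.val + 1 ∧ p.1 ≠ p.2)
  rw [hcompl, Finset.card_union_of_disjoint hdisj, cardA, cardB, ← hoffd] at htot
  have huniv : (univ : Finset (Fin n × Fin n)).card = n * n := by
    simp [Finset.card_univ]
  have hoffcard : offd.card = (n - 1) ^ 2 := by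
    obtain ⟨m, rfl⟩ : ∃ m, n = m + 1 := ⟨n - 1, by omega⟩
    have hring : (m + 1) * (m + 1) = m * m + 2 * m + 1 := by ring
    have hsq : (m + 1 - 1) ^ 2 = m * m := by simp [pow_two]
    rw [huniv, hring] at htot
    rw [hsq]
    omega
  -- Tset as a finset
  have hTset : Tset n =
      ↑(insert (1 : Equiv.Perm (Fin n)) (offd.image (fun p => transloc p.1 p.2))) := by
    ext τ
    simp only [Finset.coe_insert, Set.mem_insert_iff, Finset.mem_coe, Finset.mem_image,
      mem_filter, mem_univ, true_and, hoffd, Tset, Set.mem_setOf_eq]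
    constructor
    · rintro ⟨i, j, hij, rfl⟩
      by_cases hd : i = j
      · left; rw [hd, transloc_diag]
      · right; exact ⟨(i, j), ⟨hij, hd⟩, rfl⟩
    · rintro (rfl | ⟨p, hp, rfl⟩)
      · exact ⟨⟨0, hn⟩, ⟨0, hn⟩, by omega, (transloc_diag _).symm⟩
      · exact ⟨p.1, p.2, hp.1, rfl⟩
  have hnotmem : (1 : Equiv.Perm (Fin n)) ∉ offd.image (fun p => transloc p.1 p.2) := by
    rw [Finset.mem_image]
    rintro ⟨p, hp, heq⟩
    simp only [hoffd, mem_filter] at hp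
    have := congrArg (fun e : Equiv.Perm (Fin n) => (e p.2).val) heq
    simp only [Equiv.Perm.one_apply, transloc_val, tf_self] at this
    exact hp.2.2 (Fin.ext this)
  have hinj : Set.InjOn (fun p : Fin n × Fin n => transloc p.1 p.2) ↑offd := by
    rintro ⟨x, y⟩ hx ⟨x', y'⟩ hy hxy
    simp only [hoffd, coe_filter, Set.mem_setOf_eq] at hx hy
    obtain ⟨h1, h2⟩ := transloc_inj hx.2.1 hx.2.2 hy.2.1 hy.2.2 hxy
    simp [h1, h2]
  rw [hTset, Set.ncard_coe_finset, Finset.card_insert_of_notMem hnotmem,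
    Finset.card_image_of_injOn hinj, hoffcard]
  omega

lemma ball_iff (hn : 0 < n) (τ : Equiv.Perm (Fin n)) :
    ulamDist 1 τ ≤ 1 ↔ τ ∈ Tset n := by
  obtain ⟨m, rfl⟩ : ∃ m, n = m + 1 := ⟨n - 1, by omega⟩
  constructor
  · intro h
    have hL : m ≤ lcsLen (⇑(1 : Equiv.Perm (Fin (m+1)))) ⇑τ := by
      unfold ulamDist at h
      have := lcs_bdd (⇑(1 : Equiv.Perm (Fin (m+1)))) ⇑τ
      omega
    obtain ⟨f, g, hf, hg, hfg⟩ := lcs_wit (⇑(1 : Equiv.Perm (Fin (m+1)))) ⇑τ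
    have hf' : StrictMono (fun p : Fin m => f ⟨p.val, by omega⟩) :=
      fun p q hpq => hf hpq
    have hg' : StrictMono (fun p : Fin m => g ⟨p.val, by omega⟩) :=
      fun p q hpq => hg hpq
    obtain ⟨b, hb, hbf⟩ := skip_form hf'
    obtain ⟨a, ha, hag⟩ := skip_form hg'
    have hfg' : ∀ p : Fin m, (f ⟨p.val, by omega⟩ : Fin (m+1)) = τ (g ⟨p.val, by omega⟩) := by
      intro p
      have := hfg ⟨p.val, by omega⟩
      simpa using this
    have hmL : ∀ v : ℕ, v < m → v < lcsLen (⇑(1 : Equiv.Perm (Fin (m+1)))) ⇑τ :=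
      fun v hv => by omega
    have hF : ∀ (v : ℕ) (hv : v < m), (f ⟨v, hmL v hv⟩).val = if v < b then v else v + 1 :=
      fun v hv => hbf ⟨v, hv⟩
    have hG : ∀ (v : ℕ) (hv : v < m), (g ⟨v, hmL v hv⟩).val = if v < a then v else v + 1 :=
      fun v hv => hag ⟨v, hv⟩
    have hFG : ∀ (v : ℕ) (hv : v < m), f ⟨v, hmL v hv⟩ = τ (g ⟨v, hmL v hv⟩) :=
      fun v hv => hfg' ⟨v, hv⟩
    have ham : a < m + 1 := by omega
    have hbm : b < m + 1 := by omega
    have hτa : (τ ⟨a, ham⟩).val = b := by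
      by_contra hne
      have hc := (τ ⟨a, ham⟩).isLt
      have hp : ∃ (v : ℕ) (hv : v < m), f ⟨v, hmL v hv⟩ = τ ⟨a, ham⟩ := by
        by_cases hcb : (τ ⟨a, ham⟩).val < b
        · have hv1 : (τ ⟨a, ham⟩).val < m := by omega
          exact ⟨(τ ⟨a, ham⟩).val, hv1,
            Fin.ext (by rw [hF _ hv1]; split_ifs <;> omega)⟩
        · have hv1 : (τ ⟨a, ham⟩).val - 1 < m := by omega
          refine ⟨(τ ⟨a, ham⟩).val - 1, hv1, Fin.ext ?_⟩
          rw [hF _ hv1]; split_ifs <;> omega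
      obtain ⟨v, hv, hp⟩ := hp
      rw [hFG v hv] at hp
      have h2 := τ.injective hp
      have h3 : (g ⟨v, hmL v hv⟩).val = a := by rw [h2]
      rw [hG _ hv] at h3
      split_ifs at h3 <;> omega
    have key : τ = transloc ⟨b, hbm⟩ ⟨a, ham⟩ := by
      apply Equiv.ext; intro k; apply Fin.ext
      rw [transloc_val]
      show (τ k).val = tf b a k.val
      by_cases hka : k.val = a
      · have hk : k = ⟨a, ham⟩ := Fin.ext hka
        rw [hk, hτa]
        show b = tf b a a
        rw [tf_self]
      · rcases Nat.lt_or_ge k.val a with hlt | hge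
        · have hpm : k.val < m := by omega
          have hgk : g ⟨k.val, hmL k.val hpm⟩ = k := by
            apply Fin.ext; rw [hG _ hpm]; split_ifs <;> omega
          have h5 := hFG k.val hpm
          rw [hgk] at h5
          rw [← h5, hF _ hpm]
          unfold tf; split_ifs <;> omega
        · have hk1 : k.val - 1 < m := by have := k.isLt; omega
          have hgk : g ⟨k.val - 1, hmL _ hk1⟩ = k := by
            apply Fin.ext; rw [hG _ hk1]; split_ifs <;> omega
          have h5 := hFG (k.val - 1) hk1
          rw [hgk] at h5
          rw [← h5, hF _ hk1]
          unfold tf; split_ifs <;> omega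
    by_cases hba : b = a + 1
    · subst hba
      refine ⟨⟨a, ham⟩, ⟨a + 1, hbm⟩, show a ≠ (a + 1) + 1 by omega, ?_⟩
      rw [key]
      exact transloc_swap ⟨a, ham⟩ ⟨a + 1, hbm⟩ rfl
    · exact ⟨⟨b, hbm⟩, ⟨a, ham⟩, show b ≠ a + 1 from hba, key⟩
  · rintro ⟨i, j, hij, rfl⟩
    have hle : m ≤ lcsLen (⇑(1 : Equiv.Perm (Fin (m+1)))) ⇑(transloc i j) := by
      apply lcs_ge
        (fun p : Fin m => (⟨if p.val < i.val then p.val else p.val + 1,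
          by have := p.isLt; split_ifs <;> omega⟩ : Fin (m+1)))
        (fun p : Fin m => (⟨if p.val < j.val then p.val else p.val + 1,
          by have := p.isLt; split_ifs <;> omega⟩ : Fin (m+1)))
      · intro p q hpq
        simp only [Fin.mk_lt_mk]
        have hpq' : p.val < q.val := hpq
        split_ifs <;> omega
      · intro p q hpq
        simp only [Fin.mk_lt_mk]
        have hpq' : p.val < q.val := hpq
        split_ifs <;> omega
      · intro p
        apply Fin.ext
        simp only [Equiv.Perm.coe_one, id_eq, transloc_val]
        show (if p.val < i.val then p.val else p.val + 1)
          = tf i.val j.val (if p.val < j.val then p.val else p.val + 1)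
        unfold tf; split_ifs <;> omega
    unfold ulamDist
    omega


end Aux

/-- `S(σ,1) = {σφ : φ ∈ T_n}` and `|T_n| = |S(σ,1)| = 1 + (n−1)²`. -/
theorem sphere_eq_mul_Tset {n : ℕ} (hn : 0 < n) (σ : Equiv.Perm (Fin n)) :
    {π : Equiv.Perm (Fin n) | ulamDist σ π ≤ 1} = (fun φ => σ * φ) '' Tset n ∧
    (Tset n).ncard = {π : Equiv.Perm (Fin n) | ulamDist σ π ≤ 1}.ncard ∧
    {π : Equiv.Perm (Fin n) | ulamDist σ π ≤ 1}.ncard = 1 + (n - 1) ^ 2 := by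
  have hdist : ∀ π : Equiv.Perm (Fin n), ulamDist σ π = ulamDist 1 (σ⁻¹ * π) := by
    intro π
    suffices h : lcsLen (⇑σ) (⇑π) = lcsLen (⇑(1 : Equiv.Perm (Fin n))) (⇑(σ⁻¹ * π)) by
      unfold ulamDist; rw [h]
    unfold lcsLen
    congr 1
    ext k
    simp only [Set.mem_setOf_eq]
    constructor
    · rintro ⟨f, g, hf, hg, hfg⟩
      refine ⟨f, g, hf, hg, fun p => ?_⟩
      simp only [Equiv.Perm.coe_one, id_eq, Equiv.Perm.mul_apply]
      rw [Equiv.Perm.eq_inv_iff_eq]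
      exact hfg p
    · rintro ⟨f, g, hf, hg, hfg⟩
      refine ⟨f, g, hf, hg, fun p => ?_⟩
      have h1 := hfg p
      simp only [Equiv.Perm.coe_one, id_eq, Equiv.Perm.mul_apply] at h1
      exact Equiv.Perm.eq_inv_iff_eq.mp h1
  have hset : {π : Equiv.Perm (Fin n) | ulamDist σ π ≤ 1} = (fun φ => σ * φ) '' Tset n := by
    ext π
    simp only [Set.mem_setOf_eq, Set.mem_image]
    rw [hdist π, ball_iff hn]
    constructor
    · intro hm; exact ⟨σ⁻¹ * π, hm, by group⟩
    · rintro ⟨φ, hφ, rfl⟩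
      rw [inv_mul_cancel_left]
      exact hφ
  refine ⟨hset, ?_, ?_⟩
  · rw [hset, Set.ncard_image_of_injective _ (mul_right_injective σ)]
  · rw [hset, Set.ncard_image_of_injective _ (mul_right_injective σ), Tset_ncard hn]

end UlamPaper
end
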